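/- arXiv:1706.06240 — 6 statements merged into one kernel-verified Lean document; each statement's English description precedes it below -/
import Mathlib

section
/- The type B odd Demazure operator is a square-zero operator: (∂_n^b)^2 = 0 on Pol_n^-. -/
/-!
A `(t, u)`-twisted derivation kills `1` and is therefore determined by its values on ring
generators. For the odd Demazure operator `D`, an `(id, s)`-derivation, the anticommutator
`D ∘ s + s ∘ D` is an `(s, s²)`-derivation vanishing on the generators, so `D ∘ s = - s ∘ D`.
This kills the cross terms in
`D² (f * g) = D² f * g + (s D + D s) f * D g + s² f * D² g`, so `D²` is an `(id, s²)`-derivation;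
it vanishes on the generators since `D (x j) ∈ {0, 1}`, hence everywhere.
-/

section

variable {R : Type*} [Ring R]

def IsTwistedDerivation (t u : R →+* R) (E : R →+ R) : Prop :=
  ∀ f g, E (f * g) = E f * t g + u f * E g

namespace IsTwistedDerivation

variable {t u : R →+* R} {E : R →+ R}

theorem map_one (hE : IsTwistedDerivation t u E) : E 1 = 0 := by
  simpa using hE 1 1

theorem map_eq_zero_of_mem_closure (hE : IsTwistedDerivation t u E) {S : Set R}
    (hS : ∀ a ∈ S, E a = 0) {f : R} (hf : f ∈ Subring.closure S) : E f = 0 := by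
  induction hf using Subring.closure_induction with
  | mem a ha => exact hS a ha
  | zero => exact E.map_zero
  | one => exact hE.map_one
  | add a b _ _ ha hb => rw [E.map_add, ha, hb, add_zero]
  | neg a _ ha => rw [E.map_neg, ha, neg_zero]
  | mul a b _ _ ha hb => rw [hE, ha, hb, zero_mul, mul_zero, add_zero]

theorem anticomm {s : R →+* R} {D : R →+ R} (hD : IsTwistedDerivation (RingHom.id R) s D) :
    IsTwistedDerivation s (s.comp s) (D.comp (s : R →+ R) + (s : R →+ R).comp D) := by
  intro f g
  simp only [AddMonoidHom.add_apply, AddMonoidHom.coe_comp, AddMonoidHom.coe_coe,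
    Function.comp_apply, RingHom.coe_comp, map_mul]
  rw [hD, hD, map_add, map_mul, map_mul, RingHom.id_apply, RingHom.id_apply, add_mul, mul_add]
  abel

theorem comp_self_of_anticomm {s : R →+* R} {D : R →+ R} (hD : IsTwistedDerivation (RingHom.id R) s D)
    (hDs : ∀ f, D (s f) = - s (D f)) : IsTwistedDerivation (RingHom.id R) (s.comp s) (D.comp D) := by
  intro f g
  simp only [AddMonoidHom.coe_comp, Function.comp_apply, RingHom.coe_comp]
  rw [hD, map_add, hD, hD, hDs]
  simp only [RingHom.id_apply]
  noncomm_ring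

end IsTwistedDerivation

end

theorem stmt_1_general (n : ℕ) (R : Type*) [Ring R] (x : Fin (n + 1) → R)
    (hgen : Subring.closure (Set.range x) = ⊤)
    (s : R →+* R) (hs : ∀ j, s (x j) = - x j)
    (D : R →ₗ[ℤ] R)
    (hDn : D (x (Fin.last n)) = 1)
    (hDj : ∀ j, j ≠ Fin.last n → D (x j) = 0)
    (hL : ∀ f g, D (f * g) = D f * g + s f * D g) :
    ∀ f : R, D (D f) = 0 := by
  intro f
  have hmem : ∀ f, f ∈ Subring.closure (Set.range x) := fun f => hgen ▸ Subring.mem_top f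
  have hD : IsTwistedDerivation (RingHom.id R) s D.toAddMonoidHom := hL
  have hDx : ∀ j, D (x j) = 0 ∨ D (x j) = 1 := fun j => by
    by_cases h : j = Fin.last n
    · exact .inr (h ▸ hDn)
    · exact .inl (hDj j h)
  have hD1 : D 1 = 0 := hD.map_one
  have hDs : ∀ f, D (s f) = - s (D f) := fun f => eq_neg_of_add_eq_zero_left <|
    hD.anticomm.map_eq_zero_of_mem_closure (by
      rintro _ ⟨j, rfl⟩
      rcases hDx j with h | h <;> simp [hs, h]) (hmem f)
  exact (hD.comp_self_of_anticomm hDs).map_eq_zero_of_mem_closure (by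
    rintro _ ⟨j, rfl⟩
    rcases hDx j with h | h <;> simp [h, hD1]) (hmem f)

/-- The type B odd Demazure operator is square-zero on `Pol_n^-`. -/
theorem stmt_1 (n : ℕ) (R : Type*) [Ring R] (x : Fin (n + 1) → R)
    (hx : ∀ i j, i ≠ j → x i * x j + x j * x i = 0)
    (hgen : Subring.closure (Set.range x) = ⊤)
    (s : R →+* R) (hs : ∀ j, s (x j) = - x j)
    (D : R →ₗ[ℤ] R) (hD1 : D 1 = 0)
    (hDn : D (x (Fin.last n)) = 1)
    (hDj : ∀ j, j ≠ Fin.last n → D (x j) = 0)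
    (hL : ∀ f g, D (f * g) = D f * g + s f * D g) :
    ∀ f : R, D (D f) = 0 :=
  stmt_1_general n R x hgen s hs D hDn hDj hL
end

section
/- The operators s_1,...,s_{n-1}, s_n^d on the skew-polynomial ring Pol_n^- satisfy the type D_n Coxeter relations: (s_n^d)^2 = 1, s_i s_n^d = s_n^d s_i for i ≠ n-2, and s_n^d s_{n-2} s_n^d = s_{n-2} s_n^d s_{n-2}. -/
/-!
A ring endomorphism of `R` is determined by its values on a generating family `x`, and each of
the operators sends every generator to a generator up to sign. So each Coxeter relation only has
to be checked on a single generator `x j`, where it reduces to a short case distinction according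
to whether `j` is one of the (at most three) indices moved by the operators involved.
-/

section SignedTranspositions

variable {ι R : Type*} [Ring R]

/-- The shape of the paper's `s_i`. -/
def IsNegTransposition (x : ι → R) (g : R →+* R) (a b : ι) : Prop :=
  g (x a) = -x b ∧ g (x b) = -x a ∧ ∀ j, j ≠ a → j ≠ b → g (x j) = -x j

/-- The shape of the paper's `s_n^d`. -/
def IsDTransposition (x : ι → R) (f : R →+* R) (a b : ι) : Prop :=
  f (x a) = x b ∧ f (x b) = x a ∧ ∀ j, j ≠ a → j ≠ b → f (x j) = -x j

variable {x : ι → R} {f g : R →+* R} {a b c d : ι}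

theorem ringHom_ext_of_closure_range (hgen : Subring.closure (Set.range x) = ⊤)
    (h : ∀ j, f (x j) = g (x j)) : f = g :=
  RingHom.eq_of_eqOn_set_dense hgen (Set.forall_mem_range.2 h)

theorem IsDTransposition.comp_self (hgen : Subring.closure (Set.range x) = ⊤)
    (hf : IsDTransposition x f a b) : f.comp f = RingHom.id R := by
  obtain ⟨hfa, hfb, hf⟩ := hf
  refine ringHom_ext_of_closure_range hgen fun j => ?_
  rcases eq_or_ne j a with rfl | hja
  · simp [hfa, hfb]
  rcases eq_or_ne j b with rfl | hjb
  · simp [hfa, hfb]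
  simp [hf j hja hjb]

theorem IsDTransposition.comm_of_disjoint (hgen : Subring.closure (Set.range x) = ⊤)
    (hf : IsDTransposition x f a b) (hg : IsNegTransposition x g c d)
    (hca : c ≠ a) (hcb : c ≠ b) (hda : d ≠ a) (hdb : d ≠ b) : g.comp f = f.comp g := by
  obtain ⟨hfa, hfb, hf⟩ := hf
  obtain ⟨hgc, hgd, hg⟩ := hg
  refine ringHom_ext_of_closure_range hgen fun j => ?_
  rcases eq_or_ne j a with rfl | hja
  · simp [hfa, hg _ hca.symm hda.symm, hg _ hcb.symm hdb.symm]
  rcases eq_or_ne j b with rfl | hjb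
  · simp [hfb, hg _ hca.symm hda.symm, hg _ hcb.symm hdb.symm]
  rcases eq_or_ne j c with rfl | hjc
  · simp [hgc, hf _ hca hcb, hf _ hda hdb]
  rcases eq_or_ne j d with rfl | hjd
  · simp [hgd, hf _ hca hcb, hf _ hda hdb]
  simp [hf j hja hjb, hg j hjc hjd]

theorem IsDTransposition.comm_of_same (hgen : Subring.closure (Set.range x) = ⊤)
    (hf : IsDTransposition x f a b) (hg : IsNegTransposition x g a b) :
    g.comp f = f.comp g := by
  obtain ⟨hfa, hfb, hf⟩ := hf
  obtain ⟨hga, hgb, hg⟩ := hg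
  refine ringHom_ext_of_closure_range hgen fun j => ?_
  rcases eq_or_ne j a with rfl | hja
  · simp [hfa, hfb, hga, hgb]
  rcases eq_or_ne j b with rfl | hjb
  · simp [hfa, hfb, hga, hgb]
  simp [hf j hja hjb, hg j hja hjb]

theorem IsDTransposition.braid (hgen : Subring.closure (Set.range x) = ⊤)
    (hf : IsDTransposition x f a b) (hg : IsNegTransposition x g c a)
    (hab : a ≠ b) (hca : c ≠ a) (hcb : c ≠ b) :
    f.comp (g.comp f) = g.comp (f.comp g) := by
  obtain ⟨hfa, hfb, hf⟩ := hf
  obtain ⟨hgc, hga, hg⟩ := hg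
  have hfc : f (x c) = -x c := hf c hca hcb
  have hgb : g (x b) = -x b := hg b hcb.symm hab.symm
  refine ringHom_ext_of_closure_range hgen fun j => ?_
  rcases eq_or_ne j a with rfl | hja
  · simp [hfa, hfb, hfc, hga, hgb, hgc]
  rcases eq_or_ne j b with rfl | hjb
  · simp [hfb, hfc, hga, hgb]
  rcases eq_or_ne j c with rfl | hjc
  · simp [hfa, hfc, hgb, hgc]
  simp [hf j hja hjb, hg j hjc hja]

end SignedTranspositions

/-- The ring has `n + 3` generators; `s i` corresponds
to the simple transposition `s_{i+1}` and `sd` to `s_{n+3}^d` of the paper, and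
`s ⟨n, _⟩` is the paper's `s_{n-2}` (i.e. `s_{(n+3)-2}`). -/
theorem stmt_7 (n : ℕ) (R : Type*) [Ring R] (x : Fin (n + 3) → R)
    (hgen : Subring.closure (Set.range x) = ⊤)
    (s : Fin (n + 2) → R →+* R)
    (hsA : ∀ i : Fin (n + 2), s i (x i.castSucc) = - x i.succ ∧
      s i (x i.succ) = - x i.castSucc ∧
      ∀ j, j ≠ i.castSucc → j ≠ i.succ → s i (x j) = - x j)
    (sd : R →+* R)
    (hsd1 : sd (x (Fin.last (n + 2))) = x ((Fin.last (n + 1)).castSucc))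
    (hsd2 : sd (x ((Fin.last (n + 1)).castSucc)) = x (Fin.last (n + 2)))
    (hsd3 : ∀ j, j ≠ Fin.last (n + 2) → j ≠ (Fin.last (n + 1)).castSucc → sd (x j) = - x j) :
    sd.comp sd = RingHom.id R ∧
    (∀ i : Fin (n + 2), i ≠ ⟨n, by omega⟩ → (s i).comp sd = sd.comp (s i)) ∧
    sd.comp ((s ⟨n, by omega⟩).comp sd) = (s ⟨n, by omega⟩).comp (sd.comp (s ⟨n, by omega⟩)) := by
  have hsd : IsDTransposition x sd (Fin.last (n + 1)).castSucc (Fin.last (n + 2)) :=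
    ⟨hsd2, hsd1, fun j hja hjb => hsd3 j hjb hja⟩
  refine ⟨hsd.comp_self hgen, fun i hi => ?_, ?_⟩
  · rcases Fin.eq_castSucc_or_eq_last i with ⟨i, rfl⟩ | rfl
    · have hin : i.val < n := by
        have : i.val ≠ n := fun h => hi (Fin.ext h)
        omega
      refine hsd.comm_of_disjoint hgen (hsA _) ?_ ?_ ?_ ?_ <;>
        simp [Fin.ext_iff] <;> omega
    · have hs := hsA (Fin.last (n + 1))
      rw [Fin.succ_last] at hs
      exact hsd.comm_of_same hgen hs
  · exact hsd.braid hgen (hsA ⟨n, by omega⟩) (by simp [Fin.ext_iff]) (by simp [Fin.ext_iff])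
      (by simp [Fin.ext_iff])
end

section
/- The type D odd Demazure operator is square-zero: (∂_n^d)^2 = 0 as an operator on Pol_n^-. -/
/-!
Write `E = ∂ ∘ s + s ∘ ∂`. The twisted Leibniz rule for `∂` makes `E` a twisted derivation,
`E (f g) = E f · s g + s² f · E g`, and `E` kills every generator, so `E = 0`. Then
`∂² (f g) = ∂² f · g + E f · ∂ g + s² f · ∂² g` makes `∂²` a twisted derivation as well, and it
kills the generators because `∂` maps each of them to a constant.
-/

section TwistedDerivation

variable {R F : Type*} [Ring R] [FunLike F R R]

theorem map_one_eq_zero_of_twisted_leibniz (σ τ : R →+* R) (E : F)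
    (hE : ∀ f g, E (f * g) = E f * τ g + σ f * E g) : E 1 = 0 := by
  have h := hE 1 1
  rw [mul_one, map_one τ, map_one σ, mul_one, one_mul, left_eq_add] at h
  exact h

theorem eq_zero_of_twisted_leibniz_of_closure_eq_top [AddMonoidHomClass F R R] {S : Set R}
    (hS : Subring.closure S = ⊤) (σ τ : R →+* R) (E : F)
    (hE : ∀ f g, E (f * g) = E f * τ g + σ f * E g) (hES : ∀ y ∈ S, E y = 0) (f : R) :
    E f = 0 := by
  have hf : f ∈ Subring.closure S := hS ▸ Subring.mem_top f
  induction hf using Subring.closure_induction with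
  | mem y hy => exact hES y hy
  | zero => exact map_zero E
  | one => exact map_one_eq_zero_of_twisted_leibniz σ τ E hE
  | add f g _ _ hf hg => rw [map_add, hf, hg, add_zero]
  | neg f _ hf => rw [map_neg, hf, neg_zero]
  | mul f g _ _ hf hg => rw [hE, hf, hg, zero_mul, mul_zero, add_zero]

variable (s : R →+* R) (D : F)

theorem twisted_leibniz_anticommutator (hD : ∀ f g, D (f * g) = D f * g + s f * D g)
    (f g : R) :
    D (s (f * g)) + s (D (f * g)) =
      (D (s f) + s (D f)) * s g + s (s f) * (D (s g) + s (D g)) := by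
  rw [map_mul, hD, hD, map_add, map_mul, map_mul]
  noncomm_ring

theorem twisted_leibniz_sq_of_anticommute [AddMonoidHomClass F R R]
    (hD : ∀ f g, D (f * g) = D f * g + s f * D g) (hanti : ∀ f, D (s f) + s (D f) = 0) (f g : R) :
    D (D (f * g)) = D (D f) * g + s (s f) * D (D g) := by
  rw [hD, map_add, hD, hD]
  calc D (D f) * g + s (D f) * D g + (D (s f) * D g + s (s f) * D (D g))
      = D (D f) * g + (D (s f) + s (D f)) * D g + s (s f) * D (D g) := by noncomm_ring
    _ = D (D f) * g + s (s f) * D (D g) := by rw [hanti f, zero_mul, add_zero]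

end TwistedDerivation

theorem stmt_11_general (n : ℕ) (R : Type*) [Ring R] (x : Fin (n + 2) → R)
    (hgen : Subring.closure (Set.range x) = ⊤)
    (s : R →+* R)
    (hs1 : s (x (Fin.last (n + 1))) = x ((Fin.last n).castSucc))
    (hs2 : s (x ((Fin.last n).castSucc)) = x (Fin.last (n + 1)))
    (hs3 : ∀ j, j ≠ Fin.last (n + 1) → j ≠ (Fin.last n).castSucc → s (x j) = - x j)
    (D : R →ₗ[ℤ] R)
    (hDn : D (x (Fin.last (n + 1))) = -1)
    (hDp : D (x ((Fin.last n).castSucc)) = 1)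
    (hDj : ∀ j, j ≠ Fin.last (n + 1) → j ≠ (Fin.last n).castSucc → D (x j) = 0)
    (hL : ∀ f g, D (f * g) = D f * g + s f * D g) :
    ∀ f : R, D (D f) = 0 := by
  have hD1 : D 1 = 0 := map_one_eq_zero_of_twisted_leibniz s (RingHom.id R) D hL
  have anticommute_gen : ∀ j, D (s (x j)) + s (D (x j)) = 0 := by
    intro j
    by_cases h1 : j = Fin.last (n + 1)
    · subst h1; rw [hs1, hDp, hDn, map_neg, map_one, add_neg_cancel]
    by_cases h2 : j = (Fin.last n).castSucc
    · subst h2; rw [hs2, hDn, hDp, map_one, neg_add_cancel]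
    rw [hs3 j h1 h2, map_neg, hDj j h1 h2, map_zero, neg_zero, add_zero]
  have sq_gen : ∀ j, D (D (x j)) = 0 := by
    intro j
    by_cases h1 : j = Fin.last (n + 1)
    · subst h1; rw [hDn, map_neg, hD1, neg_zero]
    by_cases h2 : j = (Fin.last n).castSucc
    · subst h2; rw [hDp, hD1]
    rw [hDj j h1 h2, map_zero]
  have anticommute : ∀ f, D (s f) + s (D f) = 0 :=
    eq_zero_of_twisted_leibniz_of_closure_eq_top hgen (s.comp s) s
      (D.toAddMonoidHom.comp s.toAddMonoidHom + s.toAddMonoidHom.comp D.toAddMonoidHom)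
      (twisted_leibniz_anticommutator s D hL) (Set.forall_mem_range.2 anticommute_gen)
  exact eq_zero_of_twisted_leibniz_of_closure_eq_top hgen (s.comp s) (RingHom.id R)
    (D.toAddMonoidHom.comp D.toAddMonoidHom) (twisted_leibniz_sq_of_anticommute s D hL anticommute)
    (Set.forall_mem_range.2 sq_gen)

/-- The type D odd Demazure operator is square-zero: `(∂ₙᵈ)² = 0` on `Pol_n^-`. -/
theorem stmt_11 (n : ℕ) (R : Type*) [Ring R] (x : Fin (n + 2) → R)
    (hx : ∀ a b, a ≠ b → x a * x b + x b * x a = 0)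
    (hgen : Subring.closure (Set.range x) = ⊤)
    (s : R →+* R)
    (hs1 : s (x (Fin.last (n + 1))) = x ((Fin.last n).castSucc))
    (hs2 : s (x ((Fin.last n).castSucc)) = x (Fin.last (n + 1)))
    (hs3 : ∀ j, j ≠ Fin.last (n + 1) → j ≠ (Fin.last n).castSucc → s (x j) = - x j)
    (D : R →ₗ[ℤ] R) (hD1 : D 1 = 0)
    (hDn : D (x (Fin.last (n + 1))) = -1)
    (hDp : D (x ((Fin.last n).castSucc)) = 1)
    (hDj : ∀ j, j ≠ Fin.last (n + 1) → j ≠ (Fin.last n).castSucc → D (x j) = 0)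
    (hL : ∀ f g, D (f * g) = D f * g + s f * D g) :
    ∀ f : R, D (D f) = 0 :=
  stmt_11_general n R x hgen s hs1 hs2 hs3 D hDn hDp hDj hL
end

section
/- The type D odd Demazure operator satisfies x_{n-1}∂_n^d - ∂_n^d x_n = 1 and ∂_n^d x_{n-1} - x_n ∂_n^d = 1 as operators on Pol_n^-, where x_j denotes left multiplication. -/
section TwistedLeibniz

variable {R : Type*} [Ring R] {s D : R → R}

theorem mul_apply_sub_apply_mul_of_twisted_leibniz
    (hL : ∀ f g, D (f * g) = D f * g + s f * D g) {a b : R} (hsa : s a = b)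
    (hDa : D a = -1) (f : R) : b * D f - D (a * f) = f := by
  rw [hL, hDa, hsa, neg_one_mul]
  abel

theorem apply_mul_sub_mul_apply_of_twisted_leibniz
    (hL : ∀ f g, D (f * g) = D f * g + s f * D g) {a b : R} (hsb : s b = a)
    (hDb : D b = 1) (f : R) : D (b * f) - a * D f = f := by
  rw [hL, hDb, hsb, one_mul, add_sub_cancel_right]

end TwistedLeibniz

theorem stmt_12_general (n : ℕ) (R : Type*) [Ring R] (x : Fin (n + 2) → R)
    (s : R →+* R)
    (hs1 : s (x (Fin.last (n + 1))) = x ((Fin.last n).castSucc))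
    (hs2 : s (x ((Fin.last n).castSucc)) = x (Fin.last (n + 1)))
    (D : R →ₗ[ℤ] R)
    (hDn : D (x (Fin.last (n + 1))) = -1)
    (hDp : D (x ((Fin.last n).castSucc)) = 1)
    (hL : ∀ f g, D (f * g) = D f * g + s f * D g) :
    ∀ f : R,
      x ((Fin.last n).castSucc) * D f - D (x (Fin.last (n + 1)) * f) = f ∧
      D (x ((Fin.last n).castSucc) * f) - x (Fin.last (n + 1)) * D f = f := fun f =>
  ⟨mul_apply_sub_apply_mul_of_twisted_leibniz hL hs1 hDn f,
    apply_mul_sub_mul_apply_of_twisted_leibniz hL hs2 hDp f⟩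

/-- `x_{n-1} ∂ₙᵈ - ∂ₙᵈ xₙ = 1` and `∂ₙᵈ x_{n-1} - xₙ ∂ₙᵈ = 1` as operators. -/
theorem stmt_12 (n : ℕ) (R : Type*) [Ring R] (x : Fin (n + 2) → R)
    (hx : ∀ a b, a ≠ b → x a * x b + x b * x a = 0)
    (s : R →+* R)
    (hs1 : s (x (Fin.last (n + 1))) = x ((Fin.last n).castSucc))
    (hs2 : s (x ((Fin.last n).castSucc)) = x (Fin.last (n + 1)))
    (hs3 : ∀ j, j ≠ Fin.last (n + 1) → j ≠ (Fin.last n).castSucc → s (x j) = - x j)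
    (D : R →ₗ[ℤ] R) (hD1 : D 1 = 0)
    (hDn : D (x (Fin.last (n + 1))) = -1)
    (hDp : D (x ((Fin.last n).castSucc)) = 1)
    (hDj : ∀ j, j ≠ Fin.last (n + 1) → j ≠ (Fin.last n).castSucc → D (x j) = 0)
    (hL : ∀ f g, D (f * g) = D f * g + s f * D g) :
    ∀ f : R,
      x ((Fin.last n).castSucc) * D f - D (x (Fin.last (n + 1)) * f) = f ∧
      D (x ((Fin.last n).castSucc) * f) - x (Fin.last (n + 1)) * D f = f :=
  stmt_12_general n R x s hs1 hs2 D hDn hDp hL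
end

section
/- The kernel of the type D odd Demazure operator equals its image: ker(∂_n^d) = im(∂_n^d). Specifically, if ∂_n^d(f) = 0 then f = ∂_n^d(-x_n f). -/
/-! Since `∂(-xₙ) = 1`, the twisted Leibniz rule gives `∂(-xₙ f) = f - s(xₙ) ∂f`, so on the
kernel of `∂` multiplication by `-xₙ` is a right inverse of `∂`; together with `∂² = 0` this
forces `ker ∂ = im ∂`. -/

section TwistedLeibniz

variable {S R : Type*} [Semiring S] [Ring R] [Module S R] {σ : R → R} {D : R →ₗ[S] R}

theorem LinearMap.map_mul_eq_self_of_map_eq_one_of_map_eq_zero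
    (hL : ∀ f g, D (f * g) = D f * g + σ f * D g) {u f : R} (hu : D u = 1) (hf : D f = 0) :
    D (u * f) = f := by
  rw [hL, hu, hf, one_mul, mul_zero, add_zero]

theorem LinearMap.ker_eq_range_of_map_eq_one
    (hL : ∀ f g, D (f * g) = D f * g + σ f * D g) {u : R} (hu : D u = 1)
    (hD2 : ∀ f, D (D f) = 0) : LinearMap.ker D = LinearMap.range D := by
  ext f
  constructor
  · intro hf
    exact ⟨u * f, D.map_mul_eq_self_of_map_eq_one_of_map_eq_zero hL hu hf⟩
  · rintro ⟨g, rfl⟩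
    exact hD2 g

end TwistedLeibniz

theorem stmt_13_general (n : ℕ) (R : Type*) [Ring R] (x : Fin (n + 2) → R)
    (s : R →+* R)
    (D : R →ₗ[ℤ] R)
    (hDn : D (x (Fin.last (n + 1))) = -1)
    (hL : ∀ f g, D (f * g) = D f * g + s f * D g)
    (hD2 : ∀ f : R, D (D f) = 0) :
    LinearMap.ker D = LinearMap.range D ∧
    ∀ f : R, D f = 0 → f = D (- x (Fin.last (n + 1)) * f) := by
  have hu : D (- x (Fin.last (n + 1))) = 1 := by rw [map_neg, hDn, neg_neg]
  exact ⟨D.ker_eq_range_of_map_eq_one hL hu hD2, fun f hf =>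
    (D.map_mul_eq_self_of_map_eq_one_of_map_eq_zero hL hu hf).symm⟩

/-- The kernel of the type D odd Demazure operator equals its image; specifically,
if `∂ₙᵈ f = 0` then `f = ∂ₙᵈ(-xₙ f)`. -/
theorem stmt_13 (n : ℕ) (R : Type*) [Ring R] (x : Fin (n + 2) → R)
    (hx : ∀ a b, a ≠ b → x a * x b + x b * x a = 0)
    (s : R →+* R)
    (hs1 : s (x (Fin.last (n + 1))) = x ((Fin.last n).castSucc))
    (hs2 : s (x ((Fin.last n).castSucc)) = x (Fin.last (n + 1)))
    (hs3 : ∀ j, j ≠ Fin.last (n + 1) → j ≠ (Fin.last n).castSucc → s (x j) = - x j)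
    (D : R →ₗ[ℤ] R) (hD1 : D 1 = 0)
    (hDn : D (x (Fin.last (n + 1))) = -1)
    (hDp : D (x ((Fin.last n).castSucc)) = 1)
    (hDj : ∀ j, j ≠ Fin.last (n + 1) → j ≠ (Fin.last n).castSucc → D (x j) = 0)
    (hL : ∀ f g, D (f * g) = D f * g + s f * D g)
    (hD2 : ∀ f : R, D (D f) = 0) :
    LinearMap.ker D = LinearMap.range D ∧
    ∀ f : R, D f = 0 → f = D (- x (Fin.last (n + 1)) * f) :=
  stmt_13_general n R x s D hDn hL hD2
end

section
/- The spin type B elementary symmetric polynomial ε_k^b = Σ_{1 ≤ i_1 < ... < i_k ≤ n} x_{i_1}^2 ⋯ x_{i_k}^2 lies in the kernel of the type B odd Demazure operator ∂_n^b, for every 1 ≤ k ≤ n. -/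
/-!
The kernel of a twisted derivation `D` (with `D (f * g) = D f * g + s f * D g`) is a subring,
since the twisting term `s f * D g` vanishes once `D g = 0`. Each `x j ^ 2` lies in it: with
`s (x j) = -x j`, the Leibniz rule gives `D (x j ^ 2) = D (x j) * x j - x j * D (x j)`, and
`D (x j)` is `0` or `1`, so it commutes with `x j`. Hence `ε_k^b`, a sum of products of squares,
lies in the kernel.
-/

section TwistedDerivation

variable {R : Type*} [Ring R] (s : R →+* R) (D : R →+ R)
  (hL : ∀ f g, D (f * g) = D f * g + s f * D g)
include hL

theorem twistedDerivation_map_one : D 1 = 0 := by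
  have h : D 1 = D 1 + D 1 := by simpa using hL 1 1
  simpa using h.symm

def twistedDerivationKer : Subring R where
  carrier := {f | D f = 0}
  mul_mem' {f g} hf hg := by simp_all [hL f g]
  one_mem' := twistedDerivation_map_one s D hL
  add_mem' {f g} hf hg := by simp_all
  zero_mem' := D.map_zero
  neg_mem' {f} hf := by simp_all

theorem twistedDerivation_map_sq_eq_zero {y : R} (hy : s y = -y) (hc : Commute (D y) y) :
    D (y ^ 2) = 0 := by
  rw [sq, hL, hy, hc.eq, neg_mul, add_neg_cancel]

end TwistedDerivation

theorem stmt_14_general (n : ℕ) (R : Type*) [Ring R] (x : Fin (n + 1) → R)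
    (s : R →+* R) (hs : ∀ j, s (x j) = - x j)
    (D : R →ₗ[ℤ] R)
    (hDn : D (x (Fin.last n)) = 1)
    (hDj : ∀ j, j ≠ Fin.last n → D (x j) = 0)
    (hL : ∀ f g, D (f * g) = D f * g + s f * D g) :
    ∀ k : ℕ, 1 ≤ k → k ≤ n + 1 →
      D (∑ S ∈ Finset.powersetCard k (Finset.univ : Finset (Fin (n + 1))),
          ((S.sort (· ≤ ·)).map (fun i => x i ^ 2)).prod) = 0 := by
  have hL' : ∀ f g, D.toAddMonoidHom (f * g) =
      D.toAddMonoidHom f * g + s f * D.toAddMonoidHom g := hL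
  have hsq_mem (j : Fin (n + 1)) : x j ^ 2 ∈ twistedDerivationKer s D.toAddMonoidHom hL' := by
    refine twistedDerivation_map_sq_eq_zero s _ hL' (hs j) ?_
    by_cases hj : j = Fin.last n
    · subst hj
      exact hDn ▸ Commute.one_left _
    · exact hDj j hj ▸ Commute.zero_left _
  intro k _ _
  refine Subring.sum_mem (twistedDerivationKer s D.toAddMonoidHom hL') fun S _ =>
    Subring.list_prod_mem _ fun y hy => ?_
  obtain ⟨j, -, rfl⟩ := List.mem_map.mp hy
  exact hsq_mem j

/-- The spin type B elementary symmetric polynomial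
`ε_k^b = Σ_{i_1 < ... < i_k} x_{i_1}² ⋯ x_{i_k}²` lies in the kernel of `∂ₙᵇ`,
for every `1 ≤ k ≤ n`. -/
theorem stmt_14 (n : ℕ) (R : Type*) [Ring R] (x : Fin (n + 1) → R)
    (hx : ∀ a b, a ≠ b → x a * x b + x b * x a = 0)
    (s : R →+* R) (hs : ∀ j, s (x j) = - x j)
    (D : R →ₗ[ℤ] R) (hD1 : D 1 = 0)
    (hDn : D (x (Fin.last n)) = 1)
    (hDj : ∀ j, j ≠ Fin.last n → D (x j) = 0)
    (hL : ∀ f g, D (f * g) = D f * g + s f * D g) :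
    ∀ k : ℕ, 1 ≤ k → k ≤ n + 1 →
      D (∑ S ∈ Finset.powersetCard k (Finset.univ : Finset (Fin (n + 1))),
          ((S.sort (· ≤ ·)).map (fun i => x i ^ 2)).prod) = 0 :=
  stmt_14_general n R x s hs D hDn hDj hL
end
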